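/- arXiv:2101.03342 — 3 statements merged into one kernel-verified Lean document; each statement's English description precedes it below -/
import Mathlib

section
/- Let R be a reaction network over a species type S, ≈ an equivalence relation on S with multiset lifting ≈ₗ, σ a state, and τ a state with ¬(σ ≈ₗ τ). For each multiset ρ ≤ σ define Mgt(ρ) = { π | there exist σ' ≈ₗ σ and ρ' ≈ₗ ρ with ρ' ≤ σ' and σ' − ρ' + π ≈ₗ τ }. Then q[σ, {θ | θ ≈ₗ τ}] = ∑_{ρ ≤ σ} ( ∏_{s ∈ support(ρ)} C(count_σ(s), count_ρ(s)) ) · rr[ρ, Mgt(ρ)], the sum ranging over all multisets ρ contained in σ. -/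
open Classical

noncomputable section

/-- A reaction of a stochastic mass-action network:
reagent multiset, kinetic parameter, product multiset. -/
structure Reaction (S : Type*) where
  reag : Multiset S
  rate : ℝ
  prod : Multiset S

variable {S : Type*}

/-- `classCount sd s σ` is the cumulative multiplicity in `σ` of the species in the
≈-equivalence class of `s` (every ≈-class is of this form). -/
def classCount (sd : Setoid S) (s : S) (σ : Multiset S) : ℕ :=
  (σ.filter (sd.r s)).card

/-- The multiset lifting `≈ₗ` of an equivalence relation `≈` on species:
two multisets are related iff they have the same cumulative multiplicity
of every ≈-equivalence class. -/
def mlift (sd : Setoid S) (σ σ' : Multiset S) : Prop :=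
  ∀ s : S, classCount sd s σ = classCount sd s σ'

/-- Cumulative multiplicity in `σ` of an ≈-equivalence class given as an
element of the quotient. -/
def classCountQ (sd : Setoid S) (H : Quotient sd) (σ : Multiset S) : ℕ :=
  (σ.filter (fun x => Quotient.mk sd x = H)).card

/-- The multiset lifting is itself an equivalence relation on multisets. -/
def mliftSetoid (sd : Setoid S) : Setoid (Multiset S) :=
  ⟨mlift sd, ⟨fun _ _ => rfl, fun h s => (h s).symm, fun h1 h2 s => (h1 s).trans (h2 s)⟩⟩

/-- The set of reagent multisets of a reaction network. -/
def Reags (R : Finset (Reaction S)) : Finset (Multiset S) := R.image Reaction.reag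

/-- The set of product multisets of a reaction network. -/
def Prods (R : Finset (Reaction S)) : Finset (Multiset S) := R.image Reaction.prod

/-- Sum of the kinetic parameters of all reactions with reagents `ρ` and products `π`. -/
def rrOff (R : Finset (Reaction S)) (ρ π : Multiset S) : ℝ :=
  ∑ x ∈ R.filter (fun x => x.reag = ρ ∧ x.prod = π), x.rate

/-- The reaction rate `rr(ρ,π)`: the sum of the kinetic parameters of the reactions from
`ρ` to `π` when `ρ ≠ π`, with diagonal correction `rr(ρ,ρ) = -∑_{π' ∈ Prod(R), π' ≠ ρ} rr(ρ,π')`. -/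
def rr (R : Finset (Reaction S)) (ρ π : Multiset S) : ℝ :=
  if ρ = π then -∑ π' ∈ (Prods R).erase ρ, rrOff R ρ π'
  else rrOff R ρ π

/-- Cumulative reaction rate `rr[ρ,B] = ∑_{π ∈ B ∩ (Prod(R) ∪ {ρ})} rr(ρ,π)`. -/
def rrSet (R : Finset (Reaction S)) (ρ : Multiset S) (B : Set (Multiset S)) : ℝ :=
  ∑ π ∈ (insert ρ (Prods R)).filter (· ∈ B), rr R ρ π

/-- Mass-action propensity of a reaction in state `σ`. -/
def propensity (σ : Multiset S) (x : Reaction S) : ℝ :=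
  x.rate * ∏ s ∈ x.reag.toFinset, ((σ.count s).choose (x.reag.count s) : ℝ)

/-- Sum of the propensities in `σ` of all reactions leading from state `σ` to state `θ`. -/
def qOff (R : Finset (Reaction S)) (σ θ : Multiset S) : ℝ :=
  ∑ x ∈ R.filter (fun x => x.reag ≤ σ ∧ σ - x.reag + x.prod = θ), propensity σ x

/-- The (finitely many) states reachable from `σ` in one reaction. -/
def succs (R : Finset (Reaction S)) (σ : Multiset S) : Finset (Multiset S) :=
  (R.filter (fun x => x.reag ≤ σ)).image (fun x => σ - x.reag + x.prod)

/-- CTMC transition rate `q(σ,θ)` of the Markov chain of the network, with the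
convention `q(σ,σ) = -∑_{θ ≠ σ} q(σ,θ)`. -/
def q (R : Finset (Reaction S)) (σ θ : Multiset S) : ℝ :=
  if σ = θ then -∑ θ' ∈ (succs R σ).erase σ, qOff R σ θ'
  else qOff R σ θ

/-- Aggregate transition rate `q[σ,B] = ∑_{θ ∈ B} q(σ,θ)` (finitely many nonzero terms). -/
def qSet (R : Finset (Reaction S)) (σ : Multiset S) (B : Set (Multiset S)) : ℝ :=
  ∑ θ ∈ (insert σ (succs R σ)).filter (· ∈ B), q R σ θ

/-- All kinetic parameters of the network are positive. -/
def posRates (R : Finset (Reaction S)) : Prop := ∀ x ∈ R, 0 < x.rate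

/-- Species equivalence (SE): for all related species `s ≈ s'`, every context `ρ` with
`s+ρ` or `s'+ρ` a reagent multiset of `R`, and every ≈ₗ-class containing at least one
product multiset (represented by `π₀ ∈ Prod(R)`), the cumulative reaction rates agree. -/
def isSE (sd : Setoid S) (R : Finset (Reaction S)) : Prop :=
  ∀ s s' : S, sd.r s s' → ∀ ρ : Multiset S,
    ((s ::ₘ ρ) ∈ Reags R ∨ (s' ::ₘ ρ) ∈ Reags R) →
    ∀ π₀ ∈ Prods R,
      rrSet R (s ::ₘ ρ) {π | mlift sd π₀ π} = rrSet R (s' ::ₘ ρ) {π | mlift sd π₀ π}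

/-- `f` is a representative map for the equivalence `sd`. -/
def IsRep (sd : Setoid S) (f : S → S) : Prop :=
  (∀ s : S, sd.r (f s) s) ∧ ∀ s s' : S, sd.r s s' → f s = f s'

/-- The reduced reaction network of `R` by the representative map `f`: one reaction
`(ρ̂, β, π̂)` for each pair `(ρ̂, π̂)` with `ρ̂ ∈ Reag(R)`, `f(ρ̂) = ρ̂`, `f(π̂) = π̂` and
`β = ∑ { α | (ρ̂,α,π) ∈ R, f(π) = π̂ }` positive. -/
def reduced (R : Finset (Reaction S)) (f : S → S) : Finset (Reaction S) :=
  ((((R.image (fun x => (x.reag, x.prod.map f))).filter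
      (fun p => p.1.map f = p.1)).image
    (fun p => (⟨p.1, ∑ x ∈ R.filter (fun x => x.reag = p.1 ∧ x.prod.map f = p.2), x.rate,
      p.2⟩ : Reaction S)))).filter (fun x => 0 < x.rate)

/-- SMB-reaction rate: sum of parameters with no diagonal correction. -/
def rrSMBSet (R : Finset (Reaction S)) (ρ : Multiset S) (B : Set (Multiset S)) : ℝ :=
  ∑ π ∈ (Prods R).filter (· ∈ B), rrOff R ρ π

/-- Syntactic Markovian bisimulation. -/
def isSMB (sd : Setoid S) (R : Finset (Reaction S)) : Prop :=
  ∀ s s' : S, sd.r s s' → ∀ ρ π₀ : Multiset S,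
    rrSMBSet R (s ::ₘ ρ) {π | mlift sd π₀ π} = rrSMBSet R (s' ::ₘ ρ) {π | mlift sd π₀ π}


section AuxLemmas
variable {S : Type*}

lemma classCount_add (sd : Setoid S) (s : S) (a b : Multiset S) :
    classCount sd s (a + b) = classCount sd s a + classCount sd s b := by
  simp [classCount, Multiset.filter_add]

lemma classCount_sub (sd : Setoid S) (s : S) {a b : Multiset S} (h : b ≤ a) :
    classCount sd s (a - b) = classCount sd s a - classCount sd s b := by
  classical
  simp only [classCount, Multiset.filter_sub]
  exact Multiset.card_sub (Multiset.filter_le_filter _ h)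

lemma mlift_sub_add (sd : Setoid S) {σ σ' ρ ρ' : Multiset S} (hσ : mlift sd σ σ')
    (hρ : mlift sd ρ ρ') (h : ρ ≤ σ) (h' : ρ' ≤ σ') (π : Multiset S) :
    mlift sd (σ - ρ + π) (σ' - ρ' + π) := by
  intro s
  rw [classCount_add, classCount_add, classCount_sub sd s h, classCount_sub sd s h',
    hσ s, hρ s]

lemma mgt_iff (sd : Setoid S) {σ τ ρ : Multiset S} (hρ : ρ ≤ σ) (π : Multiset S) :
    (∃ σ' ρ' : Multiset S, mlift sd σ σ' ∧ mlift sd ρ ρ' ∧ ρ' ≤ σ' ∧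
        mlift sd (σ' - ρ' + π) τ)
      ↔ mlift sd (σ - ρ + π) τ := by
  constructor
  · rintro ⟨σ', ρ', hσ, hρ', hle, hτ⟩
    exact fun s => ((mlift_sub_add sd hσ hρ' hρ hle π) s).trans (hτ s)
  · intro h
    exact ⟨σ, ρ, fun _ => rfl, fun _ => rfl, hρ, h⟩

end AuxLemmas

/-- for states `σ`, `τ` with `¬(σ ≈ₗ τ)`, the aggregate transition rate from `σ`
into the ≈ₗ-class of `τ` equals the sum, over all multisets `ρ` contained in `σ`, of the
binomial product times the cumulative reaction rate into `Mgt(ρ)`. -/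
theorem qSet_eq_sum_powerset (sd : Setoid S) (R : Finset (Reaction S)) (hpos : posRates R)
    (σ τ : Multiset S) (hστ : ¬ mlift sd σ τ) :
    qSet R σ {θ | mlift sd θ τ} =
      ∑ ρ ∈ σ.powerset.toFinset,
        (∏ s ∈ ρ.toFinset, ((σ.count s).choose (ρ.count s) : ℝ)) *
          rrSet R ρ {π | ∃ σ' ρ' : Multiset S,
            mlift sd σ σ' ∧ mlift sd ρ ρ' ∧ ρ' ≤ σ' ∧ mlift sd (σ' - ρ' + π) τ} := by
  classical
  have hσB : ¬ mlift sd σ τ := hστ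
  -- the common middle form
  set f : Reaction S → ℝ := propensity σ with hf
  set s0 : Finset (Reaction S) :=
    R.filter (fun x => x.reag ≤ σ ∧ mlift sd (σ - x.reag + x.prod) τ) with hs0
  -- LHS
  have hL : qSet R σ {θ | mlift sd θ τ} = ∑ x ∈ s0, f x := by
    unfold qSet
    rw [Finset.filter_insert, if_neg (by simpa using hστ)]
    have h1 : ∀ θ ∈ (succs R σ).filter (· ∈ {θ | mlift sd θ τ}), q R σ θ = qOff R σ θ := by
      intro θ hθ
      have hθB : mlift sd θ τ := by simpa using (Finset.mem_filter.mp hθ).2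
      have : σ ≠ θ := by rintro rfl; exact hστ hθB
      rw [q, if_neg this]
    rw [Finset.sum_congr rfl h1]
    have hmaps : ∀ x ∈ s0, (σ - x.reag + x.prod) ∈
        (succs R σ).filter (· ∈ {θ | mlift sd θ τ}) := by
      intro x hx
      have h := Finset.mem_filter.mp hx
      refine Finset.mem_filter.mpr ⟨?_, by simpa using h.2.2⟩
      exact Finset.mem_image.mpr ⟨x, Finset.mem_filter.mpr ⟨h.1, h.2.1⟩, rfl⟩
    rw [← Finset.sum_fiberwise_of_maps_to hmaps f]
    refine Finset.sum_congr rfl fun θ hθ => ?_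
    have hθB : mlift sd θ τ := by simpa using (Finset.mem_filter.mp hθ).2
    rw [qOff, hs0, Finset.filter_filter]
    refine Finset.sum_congr (Finset.filter_congr fun x _ => ?_) fun _ _ => rfl
    constructor
    · rintro ⟨h1, h2⟩; exact ⟨⟨h1, h2 ▸ hθB⟩, h2⟩
    · rintro ⟨⟨h1, _⟩, h2⟩; exact ⟨h1, h2⟩
  rw [hL]
  -- RHS
  have hmaps2 : ∀ x ∈ s0, x.reag ∈ σ.powerset.toFinset := by
    intro x hx
    simpa [Multiset.mem_powerset] using (Finset.mem_filter.mp hx).2.1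
  rw [← Finset.sum_fiberwise_of_maps_to hmaps2 f]
  refine Finset.sum_congr rfl fun ρ hρmem => ?_
  have hρ : ρ ≤ σ := by simpa [Multiset.mem_powerset] using hρmem
  have hnotρ : ¬ mlift sd (σ - ρ + ρ) τ := by
    rw [tsub_add_cancel_of_le hρ]; exact hστ
  -- fiber over reagents
  have hfib : s0.filter (fun x => x.reag = ρ) =
      R.filter (fun x => x.reag = ρ ∧ mlift sd (σ - ρ + x.prod) τ) := by
    rw [hs0, Finset.filter_filter]
    refine Finset.filter_congr fun x _ => ?_
    constructor
    · rintro ⟨⟨-, h2⟩, rfl⟩; exact ⟨rfl, h2⟩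
    · rintro ⟨rfl, h2⟩; exact ⟨⟨hρ, h2⟩, rfl⟩
  rw [hfib]
  -- simplify rrSet
  have hrrSet : rrSet R ρ {π | ∃ σ' ρ' : Multiset S,
      mlift sd σ σ' ∧ mlift sd ρ ρ' ∧ ρ' ≤ σ' ∧ mlift sd (σ' - ρ' + π) τ} =
      ∑ π ∈ (Prods R).filter (fun π => mlift sd (σ - ρ + π) τ), rrOff R ρ π := by
    unfold rrSet
    have hnotmem : ρ ∉ {π : Multiset S | ∃ σ' ρ' : Multiset S,
        mlift sd σ σ' ∧ mlift sd ρ ρ' ∧ ρ' ≤ σ' ∧ mlift sd (σ' - ρ' + π) τ} :=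
      fun hmem => hnotρ ((mgt_iff sd hρ ρ).mp hmem)
    rw [Finset.filter_insert, if_neg hnotmem]
    rw [Finset.filter_congr (fun π (_ : π ∈ Prods R) => by
      simpa [Set.mem_setOf_eq] using mgt_iff sd hρ π)]
    refine Finset.sum_congr rfl fun π hπ => ?_
    have hπB : mlift sd (σ - ρ + π) τ := (Finset.mem_filter.mp hπ).2
    have : ρ ≠ π := by rintro rfl; exact hnotρ hπB
    rw [rr, if_neg this]
  rw [hrrSet, Finset.mul_sum]
  -- each π-term
  have hterm : ∀ π : Multiset S,
      (∏ s ∈ ρ.toFinset, ((σ.count s).choose (ρ.count s) : ℝ)) * rrOff R ρ π =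
        ∑ x ∈ R.filter (fun x => x.reag = ρ ∧ x.prod = π), f x := by
    intro π
    rw [rrOff, Finset.mul_sum]
    refine Finset.sum_congr rfl fun x hx => ?_
    have hreag : x.reag = ρ := (Finset.mem_filter.mp hx).2.1
    rw [hf, propensity, hreag, mul_comm]
  simp_rw [hterm]
  have hmaps3 : ∀ x ∈ R.filter (fun x => x.reag = ρ ∧ mlift sd (σ - ρ + x.prod) τ),
      x.prod ∈ (Prods R).filter (fun π => mlift sd (σ - ρ + π) τ) := by
    intro x hx
    have h := Finset.mem_filter.mp hx
    exact Finset.mem_filter.mpr ⟨Finset.mem_image_of_mem _ h.1, h.2.2⟩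
  rw [← Finset.sum_fiberwise_of_maps_to hmaps3 f]
  refine Finset.sum_congr rfl fun π hπ => ?_
  have hπB : mlift sd (σ - ρ + π) τ := (Finset.mem_filter.mp hπ).2
  rw [Finset.filter_filter]
  refine Finset.sum_congr (Finset.filter_congr fun x _ => ?_) fun _ _ => rfl
  constructor
  · rintro ⟨⟨h1, -⟩, h2⟩; exact ⟨h1, h2⟩
  · rintro ⟨h1, rfl⟩; exact ⟨⟨h1, hπB⟩, rfl⟩


end
end

section
/- (Necessity of species equivalence for ordinary lumpability.) Let R be a reaction network over a species type S and let ≈ be an equivalence relation on S with multiset lifting ≈ₗ. If ≈ₗ is an ordinarily lumpable partition of the continuous-time Markov chain of R on the full state space of multisets over S — that is, for all states σ, σ' with σ ≈ₗ σ' and every state τ, q[σ, {θ | θ ≈ₗ τ}] = q[σ', {θ | θ ≈ₗ τ}] — then ≈ is a species equivalence for R. -/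
open Classical

noncomputable section

variable {S : Type*}

/-!
Write `lump sd σ` for the multiset of `≈`-classes of the species of `σ`, so that `σ ≈ₗ σ'` iff
`lump sd σ = lump sd σ'`, and `classRate R sd ρ c` for the total kinetic parameter of the reactions
with reagents `ρ` whose products lie in the `≈ₗ`-class `c`. Both cases of species equivalence
reduce to `classRate R sd ρ c = classRate R sd ρ' c` for `ρ ≈ₗ ρ'` and `c ≠ lump sd ρ`: the
diagonal rate `rr[ρ, [ρ]]` is minus the rate into all other classes.

This is proved by strong induction on `|ρ|`, and it suffices to treat `ρ = a + γ`, `ρ' = b + γ`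
with `a ≈ b`. Lumpability at the states `ρ` and `ρ'` equates their flux into `c`. Expanding the
mass-action propensities over the sub-multisets `m ≤ ρ` consumed by a reaction splits this flux
into the terms with `m ≤ γ` (equal for `ρ` and `ρ'`, since only the class of the untouched
context `ρ - m` matters), the terms with `m = a + u`, `u < γ` (equal by induction), and the single
term `classRate R sd ρ c`.
-/

section Lumping

variable (sd : Setoid S)

def lump (σ : Multiset S) : Multiset (Quotient sd) := σ.map (Quotient.mk sd)

variable {sd}

lemma lump_add (σ σ' : Multiset S) : lump sd (σ + σ') = lump sd σ + lump sd σ' :=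
  Multiset.map_add _ _ _

lemma lump_cons (a : S) (σ : Multiset S) :
    lump sd (a ::ₘ σ) = Quotient.mk sd a ::ₘ lump sd σ :=
  Multiset.map_cons _ _ _

lemma card_lump (σ : Multiset S) : Multiset.card (lump sd σ) = Multiset.card σ :=
  Multiset.card_map _ _

lemma lump_surjective : Function.Surjective (lump sd) := fun c =>
  ⟨c.map Quotient.out, by simp [lump, Multiset.map_map]⟩

lemma lump_cons_of_rel {a b : S} (hab : sd.r a b) (γ : Multiset S) :
    lump sd (a ::ₘ γ) = lump sd (b ::ₘ γ) := by
  rw [lump_cons, lump_cons, Quotient.sound hab]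

lemma classCount_eq_count_lump (s : S) (σ : Multiset S) :
    classCount sd s σ = (lump sd σ).count (Quotient.mk sd s) := by
  rw [lump, Multiset.count_map, classCount]
  congr 1
  exact Multiset.filter_congr fun a _ => Quotient.eq.symm

theorem mlift_iff_lump_eq {σ σ' : Multiset S} : mlift sd σ σ' ↔ lump sd σ = lump sd σ' := by
  simp only [mlift, classCount_eq_count_lump, Multiset.ext]
  exact ⟨fun h => Quotient.ind h, fun h s => h _⟩

theorem apply_eq_of_lump_eq_of_swap {X : Type*} {f : Multiset S → X} {σ σ' : Multiset S}
    (hf : ∀ a b γ, sd.r a b → lump sd (a ::ₘ γ) = lump sd σ → f (a ::ₘ γ) = f (b ::ₘ γ))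
    (h : lump sd σ = lump sd σ') : f σ = f σ' := by
  induction σ using Multiset.induction generalizing σ' f with
  | empty =>
    rw [eq_comm, lump, lump, Multiset.map_zero, Multiset.map_eq_zero] at h
    rw [h]
  | cons s σ ih =>
    obtain ⟨s', hs', hss'⟩ : ∃ s' ∈ σ', Quotient.mk sd s' = Quotient.mk sd s := by
      rw [← Multiset.mem_map, ← lump, ← h, lump_cons]
      exact Multiset.mem_cons_self _ _
    rw [← Multiset.cons_erase hs'] at h ⊢
    rw [lump_cons, lump_cons, hss', Multiset.cons_inj_right] at h
    calc f (s ::ₘ σ) = f (s ::ₘ σ'.erase s') := by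
          refine ih (f := fun γ => f (s ::ₘ γ)) (fun a b γ hab hγ => ?_) h
          simp only [Multiset.cons_swap s]
          refine hf a b (s ::ₘ γ) hab ?_
          rw [lump_cons, lump_cons, lump_cons, ← hγ, lump_cons, Multiset.cons_swap]
      _ = f (s' ::ₘ σ'.erase s') :=
          hf s s' _ (Quotient.exact hss'.symm) (by rw [lump_cons, lump_cons, h])

end Lumping

namespace Multiset

variable {α : Type*} [DecidableEq α]

theorem count_powerset_eq_prod {t : Multiset α} {F : Finset α} (hF : t.toFinset ⊆ F)
    (σ : Multiset α) : count t σ.powerset = ∏ a ∈ F, (σ.count a).choose (t.count a) := by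
  induction σ using Multiset.induction generalizing t with
  | empty =>
    rw [powerset_zero, count_singleton]
    split_ifs with ht
    · simp [ht]
    · obtain ⟨a, ha⟩ := exists_mem_of_ne_zero ht
      refine (Finset.prod_eq_zero (hF (mem_toFinset.2 ha)) ?_).symm
      exact Nat.choose_eq_zero_of_lt (by simpa using count_pos.2 ha)
  | cons a σ ih =>
    rw [powerset_cons, count_add]
    by_cases hat : a ∈ t
    · have hcons : count t (σ.powerset.map (cons a)) = count (t.erase a) σ.powerset := by
        conv_lhs => rw [← cons_erase hat]
        exact count_map_eq_count' (cons a) _ (fun _ _ => (cons_inj_right a).1) _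
      have haF : a ∈ F := hF (mem_toFinset.2 hat)
      obtain ⟨k, hk⟩ := Nat.exists_eq_add_one_of_ne_zero (count_ne_zero.2 hat)
      rw [hcons, ih hF, ih ((toFinset_subset.2 (erase_subset a t)).trans hF),
        ← Finset.mul_prod_erase _ _ haF, ← Finset.mul_prod_erase _ _ haF,
        ← Finset.mul_prod_erase _ _ haF, count_erase_self, count_cons_self, hk,
        Nat.add_sub_cancel, Nat.choose_succ_succ', add_mul, add_comm]
      congr 2 <;> refine Finset.prod_congr rfl fun b hb => ?_ <;>
        simp only [count_erase_of_ne (Finset.ne_of_mem_erase hb),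
          count_cons_of_ne (Finset.ne_of_mem_erase hb)]
    · have hcons : count t (σ.powerset.map (cons a)) = 0 :=
        count_eq_zero.2 fun h => by
          obtain ⟨u, -, rfl⟩ := mem_map.1 h
          exact hat (mem_cons_self a u)
      rw [hcons, add_zero, ih hF]
      refine Finset.prod_congr rfl fun b _ => ?_
      by_cases hba : b = a
      · rw [hba, count_eq_zero.2 hat, Nat.choose_zero_right, Nat.choose_zero_right]
      · rw [count_cons_of_ne hba]

theorem count_powerset (t σ : Multiset α) :
    count t σ.powerset = ∏ a ∈ t.toFinset, (σ.count a).choose (t.count a) :=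
  count_powerset_eq_prod subset_rfl σ

theorem sum_map_powerset {M : Type*} [AddCommMonoid M] (f : Multiset α → M) (s : Multiset α) :
    (s.powerset.map f).sum = f s + ((s.powerset.filter (· ≠ s)).map f).sum := by
  have hself : count s s.powerset = 1 := by
    rw [count_powerset]
    exact Finset.prod_eq_one fun a _ => Nat.choose_self _
  rw [← filter_add_not (· = s) s.powerset, map_add, sum_add, filter_eq', hself]
  simp [filter_singleton]

end Multiset

section Rates

variable (R : Finset (Reaction S)) (sd : Setoid S)

def classRate (ρ : Multiset S) (c : Multiset (Quotient sd)) : ℝ :=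
  ∑ x ∈ R with x.reag = ρ ∧ lump sd x.prod = c, x.rate

def contextRate (ρ δ : Multiset S) (c : Multiset (Quotient sd)) : ℝ :=
  ∑ x ∈ R with x.reag = ρ ∧ lump sd (δ + x.prod) = c, x.rate

/- `m` ranges over the reagents a reaction can consume from `σ`, each occurring in `σ.powerset`
with multiplicity the mass-action binomial factor (`Multiset.count_powerset`). -/
def classFlux (σ : Multiset S) (c : Multiset (Quotient sd)) : ℝ :=
  (σ.powerset.map fun m => contextRate R sd m (σ - m) c).sum

def OrdinarilyLumpable : Prop :=
  ∀ σ σ' τ : Multiset S, mlift sd σ σ' →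
    qSet R σ {θ | mlift sd θ τ} = qSet R σ' {θ | mlift sd θ τ}

variable {R sd}

lemma contextRate_eq_ite (ρ δ : Multiset S) (c : Multiset (Quotient sd)) :
    contextRate R sd ρ δ c =
      if lump sd δ ≤ c then classRate R sd ρ (c - lump sd δ) else 0 := by
  unfold contextRate classRate
  split_ifs with hle
  · refine Finset.sum_congr (Finset.filter_congr fun x _ => ?_) fun _ _ => rfl
    rw [lump_add, eq_tsub_iff_add_eq_of_le hle, add_comm (lump sd x.prod)]
  · refine Finset.sum_eq_zero fun x hx => absurd ?_ hle
    rw [← (Finset.mem_filter.1 hx).2.2, lump_add]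
    exact Multiset.le_add_right _ _

lemma contextRate_zero (ρ : Multiset S) (c : Multiset (Quotient sd)) :
    contextRate R sd ρ 0 c = classRate R sd ρ c := by
  simp [contextRate_eq_ite, lump]

lemma contextRate_congr_context {δ δ' : Multiset S} (h : lump sd δ = lump sd δ')
    (ρ : Multiset S) (c : Multiset (Quotient sd)) :
    contextRate R sd ρ δ c = contextRate R sd ρ δ' c := by
  rw [contextRate_eq_ite, contextRate_eq_ite, h]

lemma contextRate_congr_reagent {ρ ρ' δ : Multiset S} {c : Multiset (Quotient sd)}
    (H : ∀ c', lump sd ρ ≠ c' → classRate R sd ρ c' = classRate R sd ρ' c')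
    (hc : lump sd (δ + ρ) ≠ c) : contextRate R sd ρ δ c = contextRate R sd ρ' δ c := by
  rw [contextRate_eq_ite, contextRate_eq_ite]
  split_ifs with hle
  · refine H _ fun h => hc ?_
    rw [lump_add, h, add_tsub_cancel_of_le hle]
  · rfl

lemma propensity_eq_rate_mul_count (σ : Multiset S) (x : Reaction S) :
    propensity σ x = x.rate * σ.powerset.count x.reag := by
  rw [propensity, Multiset.count_powerset]
  push_cast
  rfl

lemma sum_propensity_eq_classFlux (σ : Multiset S) (c : Multiset (Quotient sd)) :
    ∑ x ∈ R with x.reag ≤ σ ∧ lump sd (σ - x.reag + x.prod) = c, propensity σ x =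
      classFlux R sd σ c := by
  rw [classFlux, Finset.sum_multiset_map_count,
    ← Finset.sum_fiberwise_of_maps_to (g := Reaction.reag) (t := σ.powerset.toFinset)]
  · refine Finset.sum_congr rfl fun m hm => ?_
    rw [contextRate, Finset.smul_sum, Finset.filter_filter]
    refine Finset.sum_congr (Finset.filter_congr fun x _ => ?_) fun x hx => ?_
    · constructor
      · rintro ⟨⟨-, h⟩, rfl⟩
        exact ⟨rfl, h⟩
      · rintro ⟨rfl, h⟩
        exact ⟨⟨Multiset.mem_powerset.1 (Multiset.mem_toFinset.1 hm), h⟩, rfl⟩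
    · rw [propensity_eq_rate_mul_count, (Finset.mem_filter.1 hx).2.1, nsmul_eq_mul, mul_comm]
  · intro x hx
    exact Multiset.mem_toFinset.2 (Multiset.mem_powerset.2 (Finset.mem_filter.1 hx).2.1)

lemma qSet_of_not_mem {σ : Multiset S} {B : Set (Multiset S)} (hσ : σ ∉ B) :
    qSet R σ B = ∑ x ∈ R with x.reag ≤ σ ∧ σ - x.reag + x.prod ∈ B, propensity σ x := by
  rw [qSet, Finset.filter_insert, if_neg hσ]
  have hq : ∀ θ ∈ (succs R σ).filter (· ∈ B), q R σ θ =
      ∑ x ∈ R.filter (·.reag ≤ σ) with σ - x.reag + x.prod = θ, propensity σ x := by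
    intro θ hθ
    rw [q, if_neg (by rintro rfl; exact hσ (Finset.mem_filter.1 hθ).2), qOff,
      Finset.filter_filter]
  rw [Finset.sum_congr rfl hq, Finset.sum_fiberwise_eq_sum_filter, Finset.filter_filter]
  refine Finset.sum_congr (Finset.filter_congr fun x hx => ?_) fun _ _ => rfl
  refine and_congr_right fun hle => ?_
  rw [Finset.mem_filter, succs]
  exact and_iff_right (Finset.mem_image_of_mem _ (Finset.mem_filter.2 ⟨hx, hle⟩))

lemma qSet_eq_classFlux {σ τ : Multiset S} (hσ : lump sd σ ≠ lump sd τ) :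
    qSet R σ {θ | mlift sd θ τ} = classFlux R sd σ (lump sd τ) := by
  rw [qSet_of_not_mem (by simpa [mlift_iff_lump_eq] using hσ), ← sum_propensity_eq_classFlux]
  simp only [mlift_iff_lump_eq]
  rfl

lemma classFlux_eq_of_lumpable (h : OrdinarilyLumpable R sd) {σ σ' : Multiset S}
    (hσσ' : lump sd σ = lump sd σ') {c : Multiset (Quotient sd)} (hc : lump sd σ ≠ c) :
    classFlux R sd σ c = classFlux R sd σ' c := by
  obtain ⟨τ, rfl⟩ := lump_surjective c
  rw [← qSet_eq_classFlux hc, ← qSet_eq_classFlux (hσσ' ▸ hc)]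
  exact h σ σ' τ (mlift_iff_lump_eq.2 hσσ')

lemma classFlux_cons (a : S) (γ : Multiset S) (c : Multiset (Quotient sd)) :
    classFlux R sd (a ::ₘ γ) c =
      (γ.powerset.map fun u => contextRate R sd u (a ::ₘ (γ - u)) c).sum +
        classRate R sd (a ::ₘ γ) c +
        ((γ.powerset.filter (· ≠ γ)).map fun u => contextRate R sd (a ::ₘ u) (γ - u) c).sum := by
  rw [classFlux, Multiset.powerset_cons, Multiset.map_add, Multiset.sum_add, Multiset.map_map,
    Multiset.sum_map_powerset (_ ∘ Multiset.cons a), add_assoc]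
  simp only [Function.comp_apply, Multiset.sub_cons, Multiset.erase_cons_head, tsub_self,
    contextRate_zero]
  congr 2
  refine Multiset.map_congr rfl fun u hu => ?_
  rw [Multiset.cons_sub_of_le _ (Multiset.mem_powerset.1 hu)]

end Rates

section Induction

variable {R : Finset (Reaction S)} {sd : Setoid S}

lemma classRate_cons_eq_of_rel (h : OrdinarilyLumpable R sd) {a b : S} (hab : sd.r a b)
    {γ : Multiset S} {c : Multiset (Quotient sd)} (hc : lump sd (a ::ₘ γ) ≠ c)
    (ih : ∀ u < γ, ∀ c', lump sd (a ::ₘ u) ≠ c' →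
      classRate R sd (a ::ₘ u) c' = classRate R sd (b ::ₘ u) c') :
    classRate R sd (a ::ₘ γ) c = classRate R sd (b ::ₘ γ) c := by
  have hflux := classFlux_eq_of_lumpable h (lump_cons_of_rel hab γ) hc
  rw [classFlux_cons, classFlux_cons] at hflux
  have hspectator :
      (γ.powerset.map fun u => contextRate R sd u (a ::ₘ (γ - u)) c).sum =
        (γ.powerset.map fun u => contextRate R sd u (b ::ₘ (γ - u)) c).sum :=
    congrArg _ <| Multiset.map_congr rfl fun u _ =>
      contextRate_congr_context (lump_cons_of_rel hab _) _ _
  have hsmaller :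
      ((γ.powerset.filter (· ≠ γ)).map fun u => contextRate R sd (a ::ₘ u) (γ - u) c).sum =
        ((γ.powerset.filter (· ≠ γ)).map fun u => contextRate R sd (b ::ₘ u) (γ - u) c).sum := by
    refine congrArg _ <| Multiset.map_congr rfl fun u hu => ?_
    obtain ⟨hu, hne⟩ := Multiset.mem_filter.1 hu
    have hle := Multiset.mem_powerset.1 hu
    refine contextRate_congr_reagent (ih u (lt_of_le_of_ne hle hne)) ?_
    rwa [Multiset.add_cons, tsub_add_cancel_of_le hle]
  linarith

theorem classRate_eq_of_lump_eq (h : OrdinarilyLumpable R sd) {ρ ρ' : Multiset S}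
    (hρ : lump sd ρ = lump sd ρ') {c : Multiset (Quotient sd)} (hc : lump sd ρ ≠ c) :
    classRate R sd ρ c = classRate R sd ρ' c := by
  obtain ⟨n, hn⟩ : ∃ n, Multiset.card ρ = n := ⟨_, rfl⟩
  induction n using Nat.strong_induction_on generalizing ρ ρ' c with
  | _ n ih =>
  refine apply_eq_of_lump_eq_of_swap (f := fun ρ => classRate R sd ρ c) (fun a b γ hab hγ => ?_) hρ
  refine classRate_cons_eq_of_rel h hab (hγ ▸ hc) fun u hu c' hc' =>
    ih _ ?_ (lump_cons_of_rel hab u) hc' rfl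
  rw [← hn, ← card_lump (sd := sd) ρ, ← hγ, card_lump, Multiset.card_cons, Multiset.card_cons]
  exact Nat.succ_lt_succ (Multiset.card_lt_card hu)

end Induction

section ReactionRates

variable {R : Finset (Reaction S)}

lemma sum_rrOff_filter (σ : Multiset S) (B : Set (Multiset S)) :
    ∑ π ∈ (Prods R).filter (· ∈ B), rrOff R σ π = ∑ x ∈ R with x.reag = σ ∧ x.prod ∈ B, x.rate := by
  simp only [rrOff, ← Finset.filter_filter]
  rw [Finset.sum_fiberwise_eq_sum_filter]
  refine Finset.sum_congr (Finset.filter_congr fun x hx => ?_) fun _ _ => rfl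
  rw [Finset.mem_filter, Prods]
  exact and_iff_right (Finset.mem_image_of_mem _ (Finset.mem_filter.1 hx).1)

lemma rrSet_of_not_mem {σ : Multiset S} {B : Set (Multiset S)} (hσ : σ ∉ B) :
    rrSet R σ B = ∑ x ∈ R with x.reag = σ ∧ x.prod ∈ B, x.rate := by
  rw [rrSet, Finset.filter_insert, if_neg hσ, ← sum_rrOff_filter]
  exact Finset.sum_congr rfl fun π hπ => if_neg (by rintro rfl; exact hσ (Finset.mem_filter.1 hπ).2)

lemma rrSet_of_mem {σ : Multiset S} {B : Set (Multiset S)} (hσ : σ ∈ B) :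
    rrSet R σ B = -∑ x ∈ R with x.reag = σ ∧ x.prod ∉ B, x.rate := by
  have hdiag : rr R σ σ = -∑ π ∈ (Prods R).erase σ, rrOff R σ π := if_pos rfl
  have hoff : ∀ π ∈ ((Prods R).filter (· ∈ B)).erase σ, rr R σ π = rrOff R σ π :=
    fun π hπ => if_neg (Finset.ne_of_mem_erase hπ).symm
  have hcompl := sum_rrOff_filter (R := R) σ Bᶜ
  simp only [Set.mem_compl_iff] at hcompl
  have hnot : ((Prods R).erase σ).filter (· ∉ B) = (Prods R).filter (· ∉ B) := by
    rw [Finset.filter_erase]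
    exact Finset.erase_eq_of_notMem fun h => (Finset.mem_filter.1 h).2 hσ
  rw [rrSet, Finset.filter_insert, if_pos hσ,
    ← Finset.add_sum_erase _ _ (Finset.mem_insert_self _ _), Finset.erase_insert_eq_erase,
    hdiag, Finset.sum_congr rfl hoff,
    ← Finset.sum_filter_add_sum_filter_not ((Prods R).erase σ) (· ∈ B), hnot,
    Finset.filter_erase, hcompl]
  ring

end ReactionRates

section ClassRates

variable {R : Finset (Reaction S)} {sd : Setoid S}

lemma rrSet_class_of_ne {σ : Multiset S} {c : Multiset (Quotient sd)} (hσ : lump sd σ ≠ c) :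
    rrSet R σ {π | lump sd π = c} = classRate R sd σ c := by
  rw [rrSet_of_not_mem (B := {π | lump sd π = c}) hσ, classRate]
  congr 1
  ext x
  simp

lemma rrSet_class_self (σ : Multiset S) :
    rrSet R σ {π | lump sd π = lump sd σ} =
      -∑ c ∈ ((Prods R).image (lump sd)).erase (lump sd σ), classRate R sd σ c := by
  have hfiber : ∀ c,
      classRate R sd σ c = ∑ x ∈ R.filter (·.reag = σ) with lump sd x.prod = c, x.rate :=
    fun c => by rw [classRate, Finset.filter_filter]
  rw [rrSet_of_mem (B := {π | lump sd π = lump sd σ}) rfl, Finset.sum_congr rfl fun c _ => hfiber c,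
    Finset.sum_fiberwise_eq_sum_filter]
  refine congrArg _ (Finset.sum_congr (Finset.ext fun x => ?_) fun _ _ => rfl)
  simp only [Finset.mem_filter, Finset.mem_erase, Finset.mem_image, Prods]
  exact ⟨fun ⟨hx, hσ, hc⟩ => ⟨⟨hx, hσ⟩, hc, x.prod, ⟨x, hx, rfl⟩, rfl⟩,
    fun ⟨⟨hx, hσ⟩, hc, _⟩ => ⟨hx, hσ, hc⟩⟩

end ClassRates

theorem lumpable_implies_isSE_general (sd : Setoid S) (R : Finset (Reaction S))
    (h : ∀ σ σ' τ : Multiset S, mlift sd σ σ' →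
      qSet R σ {θ | mlift sd θ τ} = qSet R σ' {θ | mlift sd θ τ}) :
    isSE sd R := by
  intro s s' hss' ρ _ π₀ _
  have hlump := lump_cons_of_rel hss' ρ
  have hrate : ∀ c, lump sd (s ::ₘ ρ) ≠ c →
      classRate R sd (s ::ₘ ρ) c = classRate R sd (s' ::ₘ ρ) c :=
    fun c hc => classRate_eq_of_lump_eq h hlump hc
  have hclass : {π | mlift sd π₀ π} = {π | lump sd π = lump sd π₀} :=
    Set.ext fun π => mlift_iff_lump_eq.trans eq_comm
  rw [hclass]
  by_cases hπ₀ : lump sd (s ::ₘ ρ) = lump sd π₀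
  · rw [← hπ₀, rrSet_class_self, hlump, rrSet_class_self]
    exact congrArg _ <| Finset.sum_congr rfl fun c hc =>
      hrate c (hlump ▸ (Finset.ne_of_mem_erase hc).symm)
  · rw [rrSet_class_of_ne hπ₀, rrSet_class_of_ne (hlump ▸ hπ₀)]
    exact hrate _ hπ₀

/-- necessity of SE for ordinary lumpability: if the multiset lifting of `sd`
is an ordinarily lumpable partition of the CTMC of `R` on the full state space, then `sd`
is a species equivalence for `R`. -/
theorem lumpable_implies_isSE (sd : Setoid S) (R : Finset (Reaction S)) (hpos : posRates R)
    (h : ∀ σ σ' τ : Multiset S, mlift sd σ σ' →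
      qSet R σ {θ | mlift sd θ τ} = qSet R σ' {θ | mlift sd θ τ}) :
    isSE sd R :=
  lumpable_implies_isSE_general sd R h

end
end

section
/- Let R be a reaction network over a species type S and let ≈ be a species equivalence for R with multiset lifting ≈ₗ. Then for all multisets ρ, ρ' over S with ρ ≈ₗ ρ' and every ≈ₗ-equivalence class M, it holds that rr[ρ, M] = rr[ρ', M]. -/
open Classical

noncomputable section

variable {S : Type*}

/- ------------------- auxiliary lemmas ------------------- -/

lemma mlift_symm {sd : Setoid S} {a b : Multiset S} (h : mlift sd a b) : mlift sd b a :=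
  fun s => (h s).symm

lemma mlift_trans {sd : Setoid S} {a b c : Multiset S} (h1 : mlift sd a b)
    (h2 : mlift sd b c) : mlift sd a c :=
  fun s => (h1 s).trans (h2 s)

lemma classCount_cons (sd : Setoid S) (t s : S) (σ : Multiset S) :
    classCount sd t (s ::ₘ σ) = (if sd.r t s then 1 else 0) + classCount sd t σ := by
  simp only [classCount, Multiset.filter_cons, Multiset.card_add]
  split <;> simp

lemma rel_iff_of_rel {sd : Setoid S} {s s' : S} (hss : sd.r s s') (t : S) :
    sd.r t s ↔ sd.r t s' :=
  ⟨fun h => sd.trans h hss, fun h => sd.trans h (sd.symm hss)⟩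

lemma mlift_cons_of_rel {sd : Setoid S} {s s' : S} (hss : sd.r s s') (δ : Multiset S) :
    mlift sd (s ::ₘ δ) (s' ::ₘ δ) := by
  intro t
  rw [classCount_cons, classCount_cons, if_congr (rel_iff_of_rel hss t) rfl rfl]

lemma exists_rel_of_mlift_cons {sd : Setoid S} {s : S} {e τ' : Multiset S}
    (h : mlift sd (s ::ₘ e) τ') : ∃ s' ∈ τ', sd.r s s' := by
  have h1 : 0 < classCount sd s τ' := by
    rw [← h s, classCount_cons]
    split
    · omega
    · exact absurd (sd.refl s) (by assumption)
  rw [classCount, Multiset.card_pos_iff_exists_mem] at h1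
  obtain ⟨u, hu⟩ := h1
  rw [Multiset.mem_filter] at hu
  exact ⟨u, hu.1, hu.2⟩

lemma mlift_erase_of_mlift_cons {sd : Setoid S} {s s' : S} {e τ' : Multiset S}
    (h : mlift sd (s ::ₘ e) τ') (hs' : s' ∈ τ') (hss : sd.r s s') :
    mlift sd e (τ'.erase s') := by
  intro t
  have h2 := h t
  rw [← Multiset.cons_erase hs'] at h2
  rw [classCount_cons, classCount_cons, if_congr (rel_iff_of_rel hss t) rfl rfl] at h2
  omega

lemma rrOff_eq_zero_of_not_reag {R : Finset (Reaction S)} {σ : Multiset S}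
    (h : σ ∉ Reags R) (π : Multiset S) : rrOff R σ π = 0 := by
  apply Finset.sum_eq_zero
  intro x hx
  rw [Finset.mem_filter] at hx
  exact absurd (Finset.mem_image.mpr ⟨x, hx.1, hx.2.1⟩) h

lemma rr_eq_zero_of_not_reag {R : Finset (Reaction S)} {σ : Multiset S}
    (h : σ ∉ Reags R) (π : Multiset S) : rr R σ π = 0 := by
  unfold rr
  split
  · simp [rrOff_eq_zero_of_not_reag h]
  · exact rrOff_eq_zero_of_not_reag h π

lemma rrSet_eq_zero_of_not_reag {R : Finset (Reaction S)} {σ : Multiset S}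
    (h : σ ∉ Reags R) (B : Set (Multiset S)) : rrSet R σ B = 0 :=
  Finset.sum_eq_zero fun π _ => rr_eq_zero_of_not_reag h π

lemma rrSet_eq_sum_rrOff {R : Finset (Reaction S)} {σ : Multiset S} {B : Set (Multiset S)}
    (hσB : σ ∉ B) :
    rrSet R σ B = ∑ π ∈ (Prods R).filter (· ∈ B), rrOff R σ π := by
  rw [rrSet, Finset.filter_insert, if_neg hσB]
  apply Finset.sum_congr rfl
  intro π hπ
  rw [Finset.mem_filter] at hπ
  rw [rr, if_neg]
  intro h
  exact hσB (h ▸ hπ.2)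

lemma rrSet_eq_diag {R : Finset (Reaction S)} {σ : Multiset S} {B : Set (Multiset S)}
    (hσB : σ ∈ B) (hB : ∀ p ∈ Prods R, p ∉ B) :
    rrSet R σ B = rr R σ σ := by
  rw [rrSet, Finset.filter_insert, if_pos hσB]
  have : (Prods R).filter (· ∈ B) = ∅ := by
    rw [Finset.filter_eq_empty_iff]
    exact hB
  rw [this, Finset.sum_insert (Finset.notMem_empty σ), Finset.sum_empty, add_zero]

/-- The swap lemma: replacing one species by an equivalent one preserves `rr[·, M]`
for every ≈ₗ-class `M`, product class or not. -/
lemma rrSet_swap (sd : Setoid S) (R : Finset (Reaction S)) (hse : isSE sd R)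
    {s s' : S} (hss : sd.r s s') (δ π₀ : Multiset S) :
    rrSet R (s ::ₘ δ) {π | mlift sd π₀ π} = rrSet R (s' ::ₘ δ) {π | mlift sd π₀ π} := by
  by_cases hr : (s ::ₘ δ) ∈ Reags R ∨ (s' ::ₘ δ) ∈ Reags R
  · by_cases hp : ∃ p₀ ∈ Prods R, mlift sd π₀ p₀
    · obtain ⟨p₀, hp₀, hm⟩ := hp
      have hM : {π | mlift sd π₀ π} = {π | mlift sd p₀ π} := by
        ext π
        exact ⟨fun h => mlift_trans (mlift_symm hm) h, fun h => mlift_trans hm h⟩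
      rw [hM]
      exact hse s s' hss δ hr p₀ hp₀
    · push_neg at hp
      have hστ : mlift sd (s ::ₘ δ) (s' ::ₘ δ) := mlift_cons_of_rel hss δ
      by_cases hσ : mlift sd π₀ (s ::ₘ δ)
      · -- both states are in the class `M`, which contains no product; diagonal case
        have hσ' : mlift sd π₀ (s' ::ₘ δ) := mlift_trans hσ hστ
        have hB : ∀ p ∈ Prods R, p ∉ {π | mlift sd π₀ π} := fun p h hp' => hp p h hp'
        rw [rrSet_eq_diag (B := {π | mlift sd π₀ π}) hσ hB,
          rrSet_eq_diag (B := {π | mlift sd π₀ π}) hσ' hB]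
        have hσP : (s ::ₘ δ) ∉ Prods R := fun h => hp _ h hσ
        have hσ'P : (s' ::ₘ δ) ∉ Prods R := fun h => hp _ h hσ'
        rw [rr, if_pos rfl, rr, if_pos rfl, Finset.erase_eq_of_notMem hσP,
          Finset.erase_eq_of_notMem hσ'P]
        congr 1
        have hmaps : ∀ x ∈ Prods R, Quotient.mk (mliftSetoid sd) x ∈
            (Prods R).image (Quotient.mk (mliftSetoid sd)) :=
          fun x hx => Finset.mem_image_of_mem _ hx
        rw [← Finset.sum_fiberwise_of_maps_to hmaps (rrOff R (s ::ₘ δ)),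
          ← Finset.sum_fiberwise_of_maps_to hmaps (rrOff R (s' ::ₘ δ))]
        apply Finset.sum_congr rfl
        intro c hc
        obtain ⟨p, hpP, hpc⟩ := Finset.mem_image.mp hc
        have hfib : (Prods R).filter (fun π => Quotient.mk (mliftSetoid sd) π = c) =
            (Prods R).filter (· ∈ {π | mlift sd p π}) := by
          apply Finset.filter_congr
          intro π _
          subst hpc
          constructor
          · intro h
            exact mlift_symm (Quotient.exact h)
          · intro h
            exact Quotient.sound (show (mliftSetoid sd).r π p from mlift_symm h)
        have hσM : (s ::ₘ δ) ∉ {π | mlift sd p π} := fun h =>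
          hp p hpP (mlift_trans hσ (mlift_symm h))
        have hσ'M : (s' ::ₘ δ) ∉ {π | mlift sd p π} := fun h =>
          hp p hpP (mlift_trans hσ' (mlift_symm h))
        rw [hfib, ← rrSet_eq_sum_rrOff hσM, ← rrSet_eq_sum_rrOff hσ'M]
        exact hse s s' hss δ hr p hpP
      · -- neither state is in `M`, and `M` contains no product: both sides vanish
        have hσ' : ¬ mlift sd π₀ (s' ::ₘ δ) := fun h =>
          hσ (mlift_trans h (mlift_symm hστ))
        rw [rrSet_eq_sum_rrOff (B := {π | mlift sd π₀ π}) hσ,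
          rrSet_eq_sum_rrOff (B := {π | mlift sd π₀ π}) hσ']
        apply Finset.sum_congr rfl
        intro π hπ
        rw [Finset.mem_filter] at hπ
        exact absurd hπ.2 (hp π hπ.1)
  · push_neg at hr
    rw [rrSet_eq_zero_of_not_reag hr.1, rrSet_eq_zero_of_not_reag hr.2]

lemma add_cons' {γ m : Multiset S} {a : S} : γ + (a ::ₘ m) = a ::ₘ (γ + m) := by
  rw [add_comm, Multiset.cons_add, add_comm m γ]

lemma rrSet_key (sd : Setoid S) (R : Finset (Reaction S)) (hse : isSE sd R) :
    ∀ n (τ τ' : Multiset S), Multiset.card τ = n → mlift sd τ τ' →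
      ∀ γ π₀ : Multiset S,
        rrSet R (γ + τ) {π | mlift sd π₀ π} = rrSet R (γ + τ') {π | mlift sd π₀ π} := by
  intro n
  induction n with
  | zero =>
    intro τ τ' hcard h γ π₀
    have hτ : τ = 0 := Multiset.card_eq_zero.mp hcard
    subst hτ
    have hτ' : τ' = 0 := by
      apply Multiset.eq_zero_of_forall_notMem
      intro t ht
      have h1 := h t
      have h2 : 0 < classCount sd t τ' := by
        rw [classCount, Multiset.card_pos_iff_exists_mem]
        exact ⟨t, Multiset.mem_filter.mpr ⟨ht, sd.refl t⟩⟩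
      rw [show classCount sd t (0 : Multiset S) = 0 by simp [classCount]] at h1
      omega
    subst hτ'
    rfl
  | succ n ih =>
    intro τ τ' hcard h γ π₀
    obtain ⟨s, hs⟩ : ∃ s, s ∈ τ := Multiset.card_pos_iff_exists_mem.mp (by omega)
    obtain ⟨e, rfl⟩ : ∃ e, τ = s ::ₘ e := ⟨τ.erase s, (Multiset.cons_erase hs).symm⟩
    obtain ⟨s', hs', hss⟩ := exists_rel_of_mlift_cons h
    have hmE : mlift sd e (τ'.erase s') := mlift_erase_of_mlift_cons h hs' hss
    have hcard' : Multiset.card e = n := by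
      rw [Multiset.card_cons] at hcard
      omega
    calc rrSet R (γ + (s ::ₘ e)) {π | mlift sd π₀ π}
        = rrSet R (s ::ₘ (γ + e)) {π | mlift sd π₀ π} := by rw [add_cons']
      _ = rrSet R (s' ::ₘ (γ + e)) {π | mlift sd π₀ π} :=
          rrSet_swap sd R hse hss (γ + e) π₀
      _ = rrSet R ((s' ::ₘ γ) + e) {π | mlift sd π₀ π} := by rw [Multiset.cons_add]
      _ = rrSet R ((s' ::ₘ γ) + τ'.erase s') {π | mlift sd π₀ π} :=
          ih e (τ'.erase s') hcard' hmE (s' ::ₘ γ) π₀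
      _ = rrSet R (γ + τ') {π | mlift sd π₀ π} := by
          rw [Multiset.cons_add, ← add_cons', Multiset.cons_erase hs']

/-- if `sd` is a species equivalence for `R` then for all ≈ₗ-related multisets
`ρ ≈ₗ ρ'` and every ≈ₗ-class `M` (represented by an arbitrary multiset `π₀`),
`rr[ρ, M] = rr[ρ', M]`. -/
theorem rrSet_congr_of_isSE (sd : Setoid S) (R : Finset (Reaction S)) (hpos : posRates R)
    (hse : isSE sd R) :
    ∀ ρ ρ' : Multiset S, mlift sd ρ ρ' → ∀ π₀ : Multiset S,
      rrSet R ρ {π | mlift sd π₀ π} = rrSet R ρ' {π | mlift sd π₀ π} := by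
  intro ρ ρ' h π₀
  have := rrSet_key sd R hse (Multiset.card ρ) ρ ρ' rfl h 0 π₀
  simpa using this

end
end
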